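/- For every ε > 0 there exists ν > 1 such that ∫₀^∞ e^{−νt} 𝓘(t) dt < ε; in particular, ∫₀^∞ e^{−νt} 𝓘(t) dt is finite for such ν. -/

import Mathlib

/-!
By Tonelli, `∫₀^∞ e^{-νt} 𝓘(t) dt ≤ ∫₀^∞ ∫₀^∞ e^{-νt} t^{s-1}/Γ(s) dt ds`, and the inner integral
is the Gamma integral `ν^{-s}`. Hence the Laplace transform is at most `∫₀^∞ ν^{-s} ds = 1/log ν`,
which is below `ε` once `ν = exp (2/ε)`.
-/

open MeasureTheory

/-- The Volterra function of order `-1`: `𝓘(t) = ∫₀^∞ t^(s-1)/Γ(s) ds`. -/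
noncomputable def volterraI (t : ℝ) : ℝ :=
  ∫ s in Set.Ioi (0 : ℝ), t ^ (s - 1) / Real.Gamma s

open Set Real

theorem MeasureTheory.ofReal_integral_le_lintegral_ofReal {α : Type*} [MeasurableSpace α]
    {μ : Measure α} {f : α → ℝ} (hf : 0 ≤ᵐ[μ] f) :
    ENNReal.ofReal (∫ x, f x ∂μ) ≤ ∫⁻ x, ENNReal.ofReal (f x) ∂μ :=
  calc ENNReal.ofReal (∫ x, f x ∂μ) ≤ ‖∫ x, f x ∂μ‖ₑ := ofReal_le_enorm _
    _ ≤ ∫⁻ x, ‖f x‖ₑ ∂μ := enorm_integral_le_lintegral_enorm f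
    _ = ∫⁻ x, ENNReal.ofReal (f x) ∂μ :=
      lintegral_congr_ae (hf.mono fun _ hx ↦ enorm_of_nonneg hx)

theorem Real.continuousOn_Gamma_Ioi : ContinuousOn Gamma (Ioi 0) := fun s hs ↦
  have hs : 0 < s := hs
  (differentiableAt_Gamma fun m ↦ by linarith [(m.cast_nonneg : (0 : ℝ) ≤ m)])
    |>.continuousAt.continuousWithinAt

theorem lintegral_exp_neg_mul_rpow_div_Gamma {r s : ℝ} (hr : 0 < r) (hs : 0 < s) :
    ∫⁻ t in Ioi 0, ENNReal.ofReal (exp (-r * t) * (t ^ (s - 1) / Gamma s))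
      = ENNReal.ofReal (r⁻¹ ^ s) := by
  have hΓ : 0 < Gamma s := Gamma_pos_of_pos hs
  have heq (t : ℝ) : exp (-r * t) * (t ^ (s - 1) / Gamma s)
      = t ^ (s - 1) * exp (-(r * t)) * (Gamma s)⁻¹ := by
    rw [neg_mul]; ring
  have hint : IntegrableOn (fun t : ℝ ↦ t ^ (s - 1) * exp (-(r * t))) (Ioi 0) := by
    simpa using integrableOn_rpow_mul_exp_neg_mul_rpow (p := 1) (s := s - 1) (by linarith)
      one_pos hr
  simp_rw [heq]
  rw [← ofReal_integral_eq_lintegral_ofReal (hint.mul_const _), integral_mul_const,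
    integral_rpow_mul_exp_neg_mul_Ioi hs hr, mul_inv_cancel_right₀ hΓ.ne', one_div]
  · exact (ae_restrict_iff' measurableSet_Ioi).2 (.of_forall fun t ht ↦ by
      have : (0 : ℝ) < t := ht; positivity)

theorem continuousOn_exp_neg_mul_rpow_div_Gamma (r : ℝ) :
    ContinuousOn (fun p : ℝ × ℝ ↦ exp (-r * p.1) * (p.1 ^ (p.2 - 1) / Gamma p.2))
      (Ioi 0 ×ˢ Ioi 0) := by
  refine (by fun_prop : Continuous fun p : ℝ × ℝ ↦ exp (-r * p.1)).continuousOn.mul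
    (ContinuousOn.div ?_ (continuousOn_Gamma_Ioi.comp continuousOn_snd fun p hp ↦ hp.2)
      fun p hp ↦ (Gamma_pos_of_pos hp.2).ne')
  exact continuousOn_fst.rpow (continuousOn_snd.sub continuousOn_const)
    fun p hp ↦ .inl (ne_of_gt hp.1)

theorem lintegral_exp_neg_mul_volterraI_le {ν : ℝ} (hν : 1 < ν) :
    ∫⁻ t in Ioi 0, ENNReal.ofReal (exp (-ν * t) * volterraI t)
      ≤ ENNReal.ofReal (log ν)⁻¹ := by
  have hν₀ : 0 < ν := zero_lt_one.trans hν
  have hmeas : AEMeasurable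
      (Function.uncurry fun t s : ℝ ↦ ENNReal.ofReal (exp (-ν * t) * (t ^ (s - 1) / Gamma s)))
      ((volume.restrict (Ioi 0)).prod (volume.restrict (Ioi 0))) := by
    rw [Measure.prod_restrict]
    exact (ENNReal.continuous_ofReal.comp_continuousOn
      (continuousOn_exp_neg_mul_rpow_div_Gamma ν)).aemeasurable
      (measurableSet_Ioi.prod measurableSet_Ioi)
  calc ∫⁻ t in Ioi 0, ENNReal.ofReal (exp (-ν * t) * volterraI t)
      ≤ ∫⁻ t in Ioi 0, ∫⁻ s in Ioi 0,
          ENNReal.ofReal (exp (-ν * t) * (t ^ (s - 1) / Gamma s)) := by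
        refine setLIntegral_mono_ae' measurableSet_Ioi (.of_forall fun t ht ↦ ?_)
        rw [volterraI, ← integral_const_mul]
        refine ofReal_integral_le_lintegral_ofReal
          ((ae_restrict_iff' measurableSet_Ioi).2 (.of_forall fun s hs ↦ ?_))
        have : (0 : ℝ) < t := ht
        have := Gamma_pos_of_pos hs
        positivity
    _ = ∫⁻ s in Ioi 0, ∫⁻ t in Ioi 0,
          ENNReal.ofReal (exp (-ν * t) * (t ^ (s - 1) / Gamma s)) :=
        lintegral_lintegral_swap hmeas
    _ = ∫⁻ s in Ioi 0, ENNReal.ofReal (exp (-log ν * s) * (s ^ ((1 : ℝ) - 1) / Gamma 1)) :=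
        setLIntegral_congr_fun measurableSet_Ioi fun s hs ↦ by
          rw [lintegral_exp_neg_mul_rpow_div_Gamma hν₀ hs, rpow_def_of_pos (inv_pos.2 hν₀),
            log_inv, Gamma_one, sub_self, rpow_zero, div_one, mul_one, neg_mul]
    _ = ENNReal.ofReal (log ν)⁻¹ := by
        rw [lintegral_exp_neg_mul_rpow_div_Gamma (log_pos hν) one_pos, rpow_one]

theorem exists_laplace_volterraI_lt (ε : ℝ) (hε : 0 < ε) :
    ∃ ν : ℝ, 1 < ν ∧
      (∫⁻ t in Set.Ioi (0 : ℝ), ENNReal.ofReal (Real.exp (-ν * t) * volterraI t))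
        < ENNReal.ofReal ε ∧
      (∫⁻ t in Set.Ioi (0 : ℝ), ENNReal.ofReal (Real.exp (-ν * t) * volterraI t)) < ⊤ := by
  have hν : 1 < exp (2 / ε) := one_lt_exp_iff.2 (by positivity)
  have hlt : ∫⁻ t in Ioi 0, ENNReal.ofReal (exp (-exp (2 / ε) * t) * volterraI t)
      < ENNReal.ofReal ε := by
    refine (lintegral_exp_neg_mul_volterraI_le hν).trans_lt ?_
    rw [log_exp, inv_div, ENNReal.ofReal_lt_ofReal_iff hε]
    linarith
  exact ⟨exp (2 / ε), hν, hlt, hlt.trans_le le_top⟩
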